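/- Let (E,M) be a V-prefactorization system on a cotensored V-category B with M ⊆ Mono_V B, and suppose B has arbitrary class-indexed V-intersections of M-morphisms and V-pullbacks of M-morphisms along arbitrary morphisms. Then: (1) (E,M) is a V-factorization system on B; and (2) for any class Σ of morphisms of B, setting N := Σ^{↓V} ∩ M, the pair (N^{↑V}, N) is a V-factorization system on B. -/

import Mathlib

/-!
Write `N = H^{↓V}`; for (1) take `H = E`, so `N = M`, and for (2) take `H = Σ ∪ E`, so that
`N = Σ^{↓V} ∩ M`. Then `(N^{↑V}, N)` is a `V`-prefactorization system and only
factorizations are missing. Factor `f : X ⟶ Y` as `e ≫ m` where `m` is the `V`-intersection of all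
`N`-subobjects of `Y` through which `f` factors. By minimality, every `N`-subobject of the
codomain of `e` through which `e` factors is an isomorphism; pulling back along the bottom edge
of a square then shows that `e` is orthogonal, in the ordinary sense, to every member of `N`.
Since `N` is closed under cotensors, ordinary orthogonality of `e` to all cotensors `[v, n]` is
`V`-orthogonality of `e` to `n`.
-/

open CategoryTheory CategoryTheory.Limits CategoryTheory.MonoidalCategory

universe w v₁ v₂ v₃ v₄ u₁ u₂ u₃ u₄

namespace EnrichedFS

variable (V : Type u₁) [Category.{v₁} V] [MonoidalCategory V] [SymmetricCategory V]
  [MonoidalClosed V]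
variable (B : Type u₂) [Category.{v₂} B] [EnrichedOrdinaryCategory V B]

/-- `e` is `V`-orthogonal to `m`: the square of hom-objects
with top `B(A₂,m)`, left `B(e,X₁)`, right `B(e,X₂)`, bottom `B(A₁,m)`
is a pullback in `V`. -/
def VOrth {A₁ A₂ X₁ X₂ : B} (e : A₁ ⟶ A₂) (m : X₁ ⟶ X₂) : Prop :=
  IsPullback (eHomWhiskerLeft V A₂ m) (eHomWhiskerRight V e X₁)
    (eHomWhiskerRight V e X₂) (eHomWhiskerLeft V A₁ m)

/-- `H^{↓V}`: the class of morphisms to which every member of `H` is `V`-orthogonal. -/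
def vRlp (H : MorphismProperty B) : MorphismProperty B :=
  fun _ _ m => ∀ ⦃A₁ A₂ : B⦄ (e : A₁ ⟶ A₂), H e → VOrth V B e m

/-- `M^{↑V}`: the class of morphisms which are `V`-orthogonal to every member of `M`. -/
def vLlp (M : MorphismProperty B) : MorphismProperty B :=
  fun _ _ e => ∀ ⦃X₁ X₂ : B⦄ (m : X₁ ⟶ X₂), M m → VOrth V B e m

/-- ordinary orthogonality: unique diagonal fillers for every commutative square. -/
def OrdOrth {A₁ A₂ X₁ X₂ : B} (e : A₁ ⟶ A₂) (m : X₁ ⟶ X₂) : Prop :=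
  ∀ (u : A₁ ⟶ X₁) (v : A₂ ⟶ X₂), u ≫ m = e ≫ v →
    ∃! d : A₂ ⟶ X₁, e ≫ d = u ∧ d ≫ m = v

/-- `H^{↓}` (ordinary). -/
def ordRlp (H : MorphismProperty B) : MorphismProperty B :=
  fun _ _ m => ∀ ⦃A₁ A₂ : B⦄ (e : A₁ ⟶ A₂), H e → OrdOrth B e m

/-- `M^{↑}` (ordinary). -/
def ordLlp (M : MorphismProperty B) : MorphismProperty B :=
  fun _ _ e => ∀ ⦃X₁ X₂ : B⦄ (m : X₁ ⟶ X₂), M m → OrdOrth B e m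

/-- `(E,M)` is a `V`-prefactorization system: `E^{↓V} = M` and `M^{↑V} = E`. -/
def IsVPrefactorization (E M : MorphismProperty B) : Prop :=
  vRlp V B E = M ∧ vLlp V B M = E

/-- `(E,M)` is an ordinary prefactorization system. -/
def IsOrdPrefactorization (E M : MorphismProperty B) : Prop :=
  ordRlp B E = M ∧ ordLlp B M = E

/-- every morphism factors as a morphism in `E` followed by a morphism in `M`. -/
def FactorizationsExist (E M : MorphismProperty B) : Prop :=
  ∀ ⦃X Y : B⦄ (f : X ⟶ Y), ∃ (Z : B) (e : X ⟶ Z) (m : Z ⟶ Y), E e ∧ M m ∧ e ≫ m = f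

/-- `(E,M)` is a `V`-factorization system. -/
def IsVFactorizationSystem (E M : MorphismProperty B) : Prop :=
  IsVPrefactorization V B E M ∧ FactorizationsExist B E M

/-- `(E,M)` is an ordinary factorization system. -/
def IsOrdFactorizationSystem (E M : MorphismProperty B) : Prop :=
  IsOrdPrefactorization B E M ∧ FactorizationsExist B E M

/-- intersection of two classes of morphisms. -/
def interProp (M N : MorphismProperty B) : MorphismProperty B := fun _ _ f => M f ∧ N f

/-- `V`-monomorphisms. -/
def vMono : MorphismProperty B := fun _ _ m => ∀ A : B, Mono (eHomWhiskerLeft V A m)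

/-- `V`-epimorphisms. -/
def vEpi : MorphismProperty B := fun _ _ e => ∀ A : B, Mono (eHomWhiskerRight V e A)

/-- `V`-strong monomorphisms. -/
def vStrongMono : MorphismProperty B := fun _ _ m =>
  vMono V B m ∧ ∀ ⦃A₁ A₂ : B⦄ (e : A₁ ⟶ A₂), vEpi V B e → VOrth V B e m

/-- `V`-strong epimorphisms. -/
def vStrongEpi : MorphismProperty B := fun _ _ e =>
  vEpi V B e ∧ ∀ ⦃X₁ X₂ : B⦄ (m : X₁ ⟶ X₂), vMono V B m → VOrth V B e m

/-- ordinary monomorphisms, as a class. -/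
def ordMono : MorphismProperty B := fun _ _ m => Mono m

/-- ordinary epimorphisms, as a class. -/
def ordEpi : MorphismProperty B := fun _ _ e => Epi e

/-- ordinary strong monomorphisms. -/
def ordStrongMono : MorphismProperty B := fun _ _ m =>
  Mono m ∧ ∀ ⦃A₁ A₂ : B⦄ (e : A₁ ⟶ A₂), Epi e → OrdOrth B e m

/-- ordinary strong epimorphisms. -/
def ordStrongEpi : MorphismProperty B := fun _ _ e =>
  Epi e ∧ ∀ ⦃X₁ X₂ : B⦄ (m : X₁ ⟶ X₂), Mono m → OrdOrth B e m

/-- closure under composition with isomorphisms on either side. -/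
def ClosedUnderIsoComp (E : MorphismProperty B) : Prop :=
  (∀ ⦃X Y Z : B⦄ (e : X ⟶ Y) (i : Y ⟶ Z), E e → IsIso i → E (e ≫ i)) ∧
  (∀ ⦃X Y Z : B⦄ (i : X ⟶ Y) (e : Y ⟶ Z), IsIso i → E e → E (i ≫ e))

/-- a commutative square which is a `V`-pullback: it is sent to a pullback square
in `V` by every hom functor `B(A,-)`. -/
def IsVPullbackSq {P X Y Z : B} (p₁ : P ⟶ X) (p₂ : P ⟶ Y) (f : X ⟶ Z) (g : Y ⟶ Z) : Prop :=
  p₁ ≫ f = p₂ ≫ g ∧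
    ∀ A : B, IsPullback (eHomWhiskerLeft V A p₁) (eHomWhiskerLeft V A p₂)
      (eHomWhiskerLeft V A f) (eHomWhiskerLeft V A g)

/-- a commutative square which is a `V`-pushout: it is sent to a pullback square
in `V` by every hom functor `B(-,A)`. -/
def IsVPushoutSq {X Y₁ Y₂ Q : B} (f₁ : X ⟶ Y₁) (f₂ : X ⟶ Y₂) (i₁ : Y₁ ⟶ Q) (i₂ : Y₂ ⟶ Q) :
    Prop :=
  f₁ ≫ i₁ = f₂ ≫ i₂ ∧
    ∀ A : B, IsPullback (eHomWhiskerRight V i₁ A) (eHomWhiskerRight V i₂ A)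
      (eHomWhiskerRight V f₁ A) (eHomWhiskerRight V f₂ A)

/-- `B` has `V`-kernel pairs. -/
def HasVKernelPairs : Prop :=
  ∀ ⦃X Y : B⦄ (f : X ⟶ Y), ∃ (P : B) (p₁ p₂ : P ⟶ X), IsVPullbackSq V B p₁ p₂ f f

/-- `B` has `V`-cokernel pairs. -/
def HasVCokernelPairs : Prop :=
  ∀ ⦃X Y : B⦄ (f : X ⟶ Y), ∃ (Q : B) (i₁ i₂ : Y ⟶ Q), IsVPushoutSq V B f f i₁ i₂

/-- `m : P ⟶ C` is a `V`-fibre-product (`V`-wide-pullback) of the family `f i : X i ⟶ C`,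
with projections `π i`. -/
def IsVFibreProduct {ι : Type w} {C : B} {X : ι → B} (f : ∀ i, X i ⟶ C)
    {P : B} (m : P ⟶ C) (π : ∀ i, P ⟶ X i) : Prop :=
  (∀ i, π i ≫ f i = m) ∧
    ∀ (A : B) (Z : V) (z : Z ⟶ (A ⟶[V] C)) (zi : ∀ i, Z ⟶ (A ⟶[V] X i)),
      (∀ i, zi i ≫ eHomWhiskerLeft V A (f i) = z) →
        ∃! t : Z ⟶ (A ⟶[V] P), t ≫ eHomWhiskerLeft V A m = z ∧
          ∀ i, t ≫ eHomWhiskerLeft V A (π i) = zi i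

/-- `m : P ⟶ C` is an ordinary fibre product (wide pullback) of the family `f i : X i ⟶ C`. -/
def OrdIsFibreProduct {ι : Type w} {C : B} {X : ι → B} (f : ∀ i, X i ⟶ C)
    {P : B} (m : P ⟶ C) (π : ∀ i, P ⟶ X i) : Prop :=
  (∀ i, π i ≫ f i = m) ∧
    ∀ ⦃W' : B⦄ (z : W' ⟶ C) (zi : ∀ i, W' ⟶ X i), (∀ i, zi i ≫ f i = z) →
      ∃! t : W' ⟶ P, t ≫ m = z ∧ ∀ i, t ≫ π i = zi i

/-- a cone is a `V`-limit cone: it is sent to a limit cone in `V` by every `B(A,-)`. -/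
def IsVLimitCone {J : Type u₃} [Category.{v₃} J] {D : J ⥤ B} (c : Cone D) : Prop :=
  ∀ (A : B) (Z : V) (z : ∀ j : J, Z ⟶ (A ⟶[V] D.obj j)),
    (∀ ⦃j j' : J⦄ (φ : j ⟶ j'), z j ≫ eHomWhiskerLeft V A (D.map φ) = z j') →
      ∃! t : Z ⟶ (A ⟶[V] c.pt), ∀ j, t ≫ eHomWhiskerLeft V A (c.π.app j) = z j

/-- a cocone is a `V`-colimit cocone: it is sent to a limit cone in `V` by every `B(-,A)`. -/
def IsVColimitCocone {J : Type u₃} [Category.{v₃} J] {D : J ⥤ B} (c : Cocone D) : Prop :=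
  ∀ (A : B) (Z : V) (z : ∀ j : J, Z ⟶ (D.obj j ⟶[V] A)),
    (∀ ⦃j j' : J⦄ (φ : j ⟶ j'), z j' ≫ eHomWhiskerRight V (D.map φ) A = z j) →
      ∃! t : Z ⟶ (c.pt ⟶[V] A), ∀ j, t ≫ eHomWhiskerRight V (c.ι.app j) A = z j

/-- `B` has small `V`-limits. -/
def HasSmallVLimits : Prop :=
  ∀ (J : Type v₂) [SmallCategory J] (D : J ⥤ B), ∃ c : Cone D, IsVLimitCone V B c

/-- `B` has small `V`-colimits. -/
def HasSmallVColimits : Prop :=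
  ∀ (J : Type v₂) [SmallCategory J] (D : J ⥤ B), ∃ c : Cocone D, IsVColimitCocone V B c

/-- `B` has finite `V`-limits. -/
def HasFiniteVLimits : Prop :=
  ∀ (J : Type) [SmallCategory J] [FinCategory J] (D : J ⥤ B),
    ∃ c : Cone D, IsVLimitCone V B c

/-- `B` is well-powered with respect to the class `M`: every object has,
up to isomorphism, only a set of `M`-subobjects. -/
def WellPoweredWrt (M : MorphismProperty B) : Prop :=
  ∀ X : B, ∃ (ι : Type v₂) (Y : ι → B) (f : ∀ i, Y i ⟶ X), (∀ i, M (f i)) ∧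
    ∀ ⦃Z : B⦄ (g : Z ⟶ X), M g → ∃ (i : ι) (h : Z ≅ Y i), h.hom ≫ f i = g

/-- `B` is co-well-powered with respect to the class `E`. -/
def CoWellPoweredWrt (E : MorphismProperty B) : Prop :=
  ∀ X : B, ∃ (ι : Type v₂) (Y : ι → B) (f : ∀ i, X ⟶ Y i), (∀ i, E (f i)) ∧
    ∀ ⦃Z : B⦄ (g : X ⟶ Z), E g → ∃ (i : ι) (h : Y i ≅ Z), f i ≫ h.hom = g

/-- comparison morphism `B(T, X) ⟶ [v, B(A, X)]` in `V` induced by a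
unit `η : v ⟶ B(A, T)`, where `T` is a candidate tensor `v ⊗ A`. -/
def tensorComparison {v : V} {A T : B} (η : v ⟶ (A ⟶[V] T)) (X : B) :
    (T ⟶[V] X) ⟶ (ihom v).obj (A ⟶[V] X) :=
  MonoidalClosed.curry (eComp V A T X) ≫ (MonoidalClosed.pre η).app (A ⟶[V] X)

/-- `η : v ⟶ B(A,T)` exhibits `T` as a tensor `v ⊗ A` in the enriched sense. -/
def IsTensorUnit (v : V) (A T : B) (η : v ⟶ (A ⟶[V] T)) : Prop :=
  ∀ X : B, IsIso (tensorComparison V B η X)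

/-- `B` is tensored over `V`. -/
def Tensored : Prop :=
  ∀ (v : V) (A : B), ∃ (T : B) (η : v ⟶ (A ⟶[V] T)), IsTensorUnit V B v A T η

/-- `E` is closed under tensors: whenever tensors exist, `v ⊗ e` lies in `E` for `e ∈ E`. -/
def ClosedUnderTensors (E : MorphismProperty B) : Prop :=
  ∀ (v : V) ⦃A₁ A₂ : B⦄ (e : A₁ ⟶ A₂) {T₁ T₂ : B}
    (η₁ : v ⟶ (A₁ ⟶[V] T₁)) (η₂ : v ⟶ (A₂ ⟶[V] T₂)),
    IsTensorUnit V B v A₁ T₁ η₁ → IsTensorUnit V B v A₂ T₂ η₂ → E e →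
      ∀ t : T₁ ⟶ T₂, η₁ ≫ eHomWhiskerLeft V A₁ t = η₂ ≫ eHomWhiskerRight V e T₂ → E t

/-- comparison morphism `B(A, C) ⟶ [v, B(A, X)]` in `V` induced by a
counit `ε : v ⟶ B(C, X)`, where `C` is a candidate cotensor `[v, X]`. -/
def cotensorComparison {v : V} {C X : B} (ε : v ⟶ (C ⟶[V] X)) (A : B) :
    (A ⟶[V] C) ⟶ (ihom v).obj (A ⟶[V] X) :=
  MonoidalClosed.curry ((β_ (C ⟶[V] X) (A ⟶[V] C)).hom ≫ eComp V A C X) ≫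
    (MonoidalClosed.pre ε).app (A ⟶[V] X)

/-- `ε : v ⟶ B(C,X)` exhibits `C` as a cotensor `[v, X]` in the enriched sense. -/
def IsCotensorCounit (v : V) (X C : B) (ε : v ⟶ (C ⟶[V] X)) : Prop :=
  ∀ A : B, IsIso (cotensorComparison V B ε A)

/-- `B` is cotensored over `V`. -/
def Cotensored : Prop :=
  ∀ (v : V) (X : B), ∃ (C : B) (ε : v ⟶ (C ⟶[V] X)), IsCotensorCounit V B v X C ε

/-- `M` is closed under cotensors: `[v, m]` lies in `M` for `m ∈ M`. -/
def ClosedUnderCotensors (M : MorphismProperty B) : Prop :=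
  ∀ (v : V) ⦃X₁ X₂ : B⦄ (m : X₁ ⟶ X₂) {C₁ C₂ : B}
    (ε₁ : v ⟶ (C₁ ⟶[V] X₁)) (ε₂ : v ⟶ (C₂ ⟶[V] X₂)),
    IsCotensorCounit V B v X₁ C₁ ε₁ → IsCotensorCounit V B v X₂ C₂ ε₂ → M m →
      ∀ t : C₁ ⟶ C₂, ε₁ ≫ eHomWhiskerLeft V C₁ m = ε₂ ≫ eHomWhiskerRight V t X₂ → M t

/-- a `V`-functor from a `V`-category `J` to an enriched ordinary category `D`. -/
structure VFunctor (J : Type u₃) [EnrichedCategory V J]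
    (D : Type u₄) [Category.{v₄} D] [EnrichedOrdinaryCategory V D] where
  obj : J → D
  emap : ∀ X Y : J, (X ⟶[V] Y) ⟶ (obj X ⟶[V] obj Y)
  emap_id : ∀ X : J, eId V X ≫ emap X X = eId V (obj X)
  emap_comp : ∀ X Y Z : J,
    eComp V X Y Z ≫ emap X Z = (emap X Y ⊗ₘ emap Y Z) ≫ eComp V (obj X) (obj Y) (obj Z)

/-- the underlying action of a `V`-functor on ordinary morphisms. -/
def VFunctor.map' {J : Type u₃} [Category.{v₃} J] [EnrichedOrdinaryCategory V J]
    {D : Type u₄} [Category.{v₄} D] [EnrichedOrdinaryCategory V D]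
    (F : VFunctor V J D) {X Y : J} (f : X ⟶ Y) : F.obj X ⟶ F.obj Y :=
  (eHomEquiv V).symm (eHomEquiv V f ≫ F.emap X Y)

/-- a `V`-adjunction `F ⊣ G`, given by a `V`-natural isomorphism
`D(F A, X) ≅ A(A, G X)` of hom-objects. -/
structure VAdjunction {A : Type u₃} [Category.{v₃} A] [EnrichedOrdinaryCategory V A]
    {D : Type u₄} [Category.{v₄} D] [EnrichedOrdinaryCategory V D]
    (F : VFunctor V A D) (G : VFunctor V D A) where
  iso : ∀ (X : A) (Y : D), (F.obj X ⟶[V] Y) ≅ (X ⟶[V] G.obj Y)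
  nat_right : ∀ (X : A) (Y Y' : D),
    eComp V (F.obj X) Y Y' ≫ (iso X Y').hom =
      ((iso X Y).hom ⊗ₘ G.emap Y Y') ≫ eComp V X (G.obj Y) (G.obj Y')
  nat_left : ∀ (X X' : A) (Y : D),
    (F.emap X X' ▷ (F.obj X' ⟶[V] Y)) ≫ eComp V (F.obj X) (F.obj X') Y ≫ (iso X Y).hom =
      ((X ⟶[V] X') ◁ (iso X' Y).hom) ≫ eComp V X X' (G.obj Y)

/-- a `V`-functor `J → V` (a weight), presented by its uncurried action. -/
structure VWeight (J : Type u₃) [EnrichedCategory V J] where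
  obj : J → V
  act : ∀ j j' : J, obj j ⊗ (j ⟶[V] j') ⟶ obj j'
  act_id : ∀ j : J, (obj j ◁ eId V j) ≫ act j j = (ρ_ (obj j)).hom
  act_comp : ∀ j j' j'' : J,
    (α_ (obj j) (j ⟶[V] j') (j' ⟶[V] j'')).inv ≫ (act j j' ▷ (j' ⟶[V] j'')) ≫ act j' j'' =
      (obj j ◁ eComp V j j' j'') ≫ act j j''

/-- a `V`-natural transformation between `V`-functors. -/
structure VNatTrans {J : Type u₃} [EnrichedCategory V J]
    {D : Type u₄} [Category.{v₄} D] [EnrichedOrdinaryCategory V D]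
    (F G : VFunctor V J D) where
  app : ∀ j : J, F.obj j ⟶ G.obj j
  naturality : ∀ j j' : J,
    F.emap j j' ≫ eHomWhiskerLeft V (F.obj j) (app j') =
      G.emap j j' ≫ eHomWhiskerRight V (app j) (G.obj j')

/-- `cone` exhibits `L` as the `V`-enriched weighted (indexed) limit `[W, F]`. -/
structure IsWeightedLimit {J : Type u₃} [EnrichedCategory V J]
    {D : Type u₄} [Category.{v₄} D] [EnrichedOrdinaryCategory V D]
    (W : VWeight V J) (F : VFunctor V J D) (L : D)
    (cone : ∀ j : J, W.obj j ⟶ (L ⟶[V] F.obj j)) : Prop where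
  natural : ∀ j j' : J,
    W.act j j' ≫ cone j' =
      (cone j ▷ (j ⟶[V] j')) ≫ ((L ⟶[V] F.obj j) ◁ F.emap j j') ≫
        eComp V L (F.obj j) (F.obj j')
  universal : ∀ (A : D) (Z : V) (μ : ∀ j : J, Z ⊗ W.obj j ⟶ (A ⟶[V] F.obj j)),
    (∀ j j' : J,
      (Z ◁ W.act j j') ≫ μ j' =
        (α_ Z (W.obj j) (j ⟶[V] j')).inv ≫ (μ j ▷ (j ⟶[V] j')) ≫
          ((A ⟶[V] F.obj j) ◁ F.emap j j') ≫ eComp V A (F.obj j) (F.obj j')) →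
      ∃! t : Z ⟶ (A ⟶[V] L), ∀ j : J,
        (t ▷ W.obj j) ≫ ((A ⟶[V] L) ◁ cone j) ≫ eComp V A L (F.obj j) = μ j

/-- `B` is `V`-finitely-well-complete: it has finite `V`-limits and `V`-intersections
of arbitrary class-indexed families of `V`-strong monomorphisms. -/
def VFinitelyWellComplete : Prop :=
  HasFiniteVLimits V B ∧
    ∀ {ι : Type (max u₂ v₂)} {C : B} (X : ι → B) (f : ∀ i, X i ⟶ C),
      (∀ i, vStrongMono V B (f i)) →
        ∃ (P : B) (m : P ⟶ C) (π : ∀ i, P ⟶ X i), IsVFibreProduct V B f m π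

/-- `B` is finitely well-complete (ordinary sense): it has finite limits and
intersections of arbitrary class-indexed families of strong monomorphisms. -/
def OrdFinitelyWellComplete : Prop :=
  HasFiniteLimits B ∧
    ∀ {ι : Type (max u₂ v₂)} {C : B} (X : ι → B) (f : ∀ i, X i ⟶ C),
      (∀ i, ordStrongMono B (f i)) →
        ∃ (P : B) (m : P ⟶ C) (π : ∀ i, P ⟶ X i), OrdIsFibreProduct B f m π

section General

variable {V B}
omit [SymmetricCategory V] [MonoidalClosed V]

lemma isPullback_of_existsUnique {C : Type*} [Category C] {P X Y W : C} {fst : P ⟶ X}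
    {snd : P ⟶ Y} {f : X ⟶ W} {g : Y ⟶ W} (comm : fst ≫ f = snd ≫ g)
    (h : ∀ (Z : C) (x : Z ⟶ X) (y : Z ⟶ Y), x ≫ f = y ≫ g →
      ∃! l : Z ⟶ P, l ≫ fst = x ∧ l ≫ snd = y) : IsPullback fst snd f g :=
  IsPullback.of_isLimit <| PullbackCone.IsLimit.mk comm
    (fun s => (h _ s.fst s.snd s.condition).choose)
    (fun s => (h _ s.fst s.snd s.condition).choose_spec.1.1)
    (fun s => (h _ s.fst s.snd s.condition).choose_spec.1.2)
    (fun s _ h₁ h₂ => (h _ s.fst s.snd s.condition).unique ⟨h₁, h₂⟩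
      (h _ s.fst s.snd s.condition).choose_spec.1)

lemma eHomEquiv_comp_eq_whiskerLeft {X Y Z : B} (f : X ⟶ Y) (g : Y ⟶ Z) :
    eHomEquiv V (f ≫ g) = eHomEquiv V f ≫ eHomWhiskerLeft V X g := by
  simp only [eHomEquiv_comp, tensorHom_def_assoc, MonoidalCategory.whiskerRight_id,
    ← unitors_equal, Category.assoc, Iso.inv_hom_id_assoc, eHomWhiskerLeft]

lemma eHomWhiskerLeft_whiskerRight_eComp (A : B) {C₁ C₂ : B} (t : C₁ ⟶ C₂) (X : B) :
    (eHomWhiskerLeft V A t ▷ (C₂ ⟶[V] X)) ≫ eComp V A C₂ X =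
      ((A ⟶[V] C₁) ◁ eHomWhiskerRight V t X) ≫ eComp V A C₁ X := by
  dsimp only [eHomWhiskerLeft, eHomWhiskerRight]
  simp only [comp_whiskerRight, MonoidalCategory.whiskerLeft_comp, Category.assoc]
  rw [← e_assoc', associator_naturality_middle_assoc]
  have h : ((ρ_ (A ⟶[V] C₁)).inv ▷ (C₂ ⟶[V] X)) ≫
      (α_ (A ⟶[V] C₁) (𝟙_ V) (C₂ ⟶[V] X)).hom = (A ⟶[V] C₁) ◁ (λ_ (C₂ ⟶[V] X)).inv := by
    monoidal_coherence
  rw [reassoc_of% h]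

lemma mono_of_vMono {X Y : B} {f : X ⟶ Y} (h : vMono V B f) : Mono f where
  right_cancellation {W} a b hab := (eHomEquiv V).injective <| by
    have := h W
    rw [← cancel_mono (eHomWhiskerLeft V W f), ← eHomEquiv_comp_eq_whiskerLeft,
      ← eHomEquiv_comp_eq_whiskerLeft, hab]

lemma IsVPullbackSq.exists_lift {Z₁ Z₂ Q P : B} {n : Z₁ ⟶ Z₂} {w : Q ⟶ Z₂} {p : P ⟶ Z₁}
    {q : P ⟶ Q} (hsq : IsVPullbackSq V B p q n w) {W : B} (u : W ⟶ Z₁) (x : W ⟶ Q)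
    (hux : u ≫ n = x ≫ w) : ∃ l : W ⟶ P, l ≫ p = u ∧ l ≫ q = x := by
  have hpb := hsq.2 W
  have hcomm :
      eHomEquiv V u ≫ eHomWhiskerLeft V W n = eHomEquiv V x ≫ eHomWhiskerLeft V W w := by
    rw [← eHomEquiv_comp_eq_whiskerLeft, ← eHomEquiv_comp_eq_whiskerLeft, hux]
  refine ⟨(eHomEquiv V).symm (hpb.lift _ _ hcomm), ?_, ?_⟩ <;>
    apply (eHomEquiv V).injective <;>
    simp only [eHomEquiv_comp_eq_whiskerLeft, Equiv.apply_symm_apply, hpb.lift_fst,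
      hpb.lift_snd]

lemma IsVFibreProduct.exists_lift {ι : Type w} {C : B} {X : ι → B} {f : ∀ i, X i ⟶ C}
    {P : B} {m : P ⟶ C} {π : ∀ i, P ⟶ X i} (hfp : IsVFibreProduct V B f m π)
    {W : B} (z : W ⟶ C) (g : ∀ i, W ⟶ X i) (hg : ∀ i, g i ≫ f i = z) :
    ∃ l : W ⟶ P, l ≫ m = z := by
  obtain ⟨l, ⟨hl, -⟩, -⟩ := hfp.2 W (𝟙_ V) (eHomEquiv V z) (fun i => eHomEquiv V (g i))
    (fun i => by rw [← eHomEquiv_comp_eq_whiskerLeft, hg i])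
  exact ⟨(eHomEquiv V).symm l, (eHomEquiv V).injective <| by
    rw [eHomEquiv_comp_eq_whiskerLeft, Equiv.apply_symm_apply, hl]⟩

end General

section Orthogonality

variable {V B}
omit [SymmetricCategory V] [MonoidalClosed V]

variable {A₁ A₂ : B} {e : A₁ ⟶ A₂}

lemma VOrth.comp {X₁ X₂ X₃ : B} {m : X₁ ⟶ X₂} {m' : X₂ ⟶ X₃}
    (h : VOrth V B e m) (h' : VOrth V B e m') : VOrth V B e (m ≫ m') := by
  rw [VOrth, eHomWhiskerLeft_comp, eHomWhiskerLeft_comp]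
  exact h.paste_horiz h'

lemma VOrth.of_isVPullbackSq {Z₁ Z₂ Q P : B} {n : Z₁ ⟶ Z₂} {w : Q ⟶ Z₂} {p : P ⟶ Z₁}
    {q : P ⟶ Q} (hsq : IsVPullbackSq V B p q n w) (hn : VOrth V B e n) : VOrth V B e q := by
  obtain ⟨hcomm, hpb⟩ := hsq
  apply isPullback_of_existsUnique (eHom_whisker_exchange V e q)
  intro Z x y hxy
  have hxy' : (x ≫ eHomWhiskerLeft V A₂ w) ≫ eHomWhiskerRight V e Z₂ =
      (y ≫ eHomWhiskerLeft V A₁ p) ≫ eHomWhiskerLeft V A₁ n := by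
    rw [Category.assoc, eHom_whisker_exchange, ← Category.assoc, hxy, Category.assoc,
      Category.assoc, ← eHomWhiskerLeft_comp, ← eHomWhiskerLeft_comp, hcomm]
  have hl₁ := hn.lift_fst _ _ hxy'
  have hl₁' := hn.lift_snd _ _ hxy'
  set l₁ := hn.lift _ _ hxy'
  have hlp : (hpb A₂).lift l₁ x hl₁ ≫ eHomWhiskerLeft V A₂ p = l₁ := (hpb A₂).lift_fst _ _ _
  have hlq : (hpb A₂).lift l₁ x hl₁ ≫ eHomWhiskerLeft V A₂ q = x := (hpb A₂).lift_snd _ _ _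
  refine ⟨(hpb A₂).lift l₁ x hl₁, ⟨hlq, ?_⟩, fun l' ⟨h₁, h₂⟩ => ?_⟩
  · apply (hpb A₁).hom_ext
    · rw [Category.assoc, ← eHom_whisker_exchange, ← Category.assoc, hlp, hl₁']
    · rw [Category.assoc, ← eHom_whisker_exchange, ← Category.assoc, hlq, hxy]
  · apply (hpb A₂).hom_ext _ (h₁.trans hlq.symm)
    rw [hlp]
    apply hn.hom_ext
    · rw [Category.assoc, ← eHomWhiskerLeft_comp, hcomm, eHomWhiskerLeft_comp,
        ← Category.assoc, h₁, hl₁]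
    · rw [Category.assoc, eHom_whisker_exchange, ← Category.assoc, h₂, hl₁']

lemma VOrth.of_isVFibreProduct {ι : Type w} {C : B} {X : ι → B} {f : ∀ i, X i ⟶ C}
    {P : B} {m : P ⟶ C} {π : ∀ i, P ⟶ X i} (hfp : IsVFibreProduct V B f m π)
    (hf : ∀ i, VOrth V B e (f i)) : VOrth V B e m := by
  obtain ⟨hπ, huniv⟩ := hfp
  apply isPullback_of_existsUnique (eHom_whisker_exchange V e m)
  intro Z x y hxy
  have hxy' : ∀ i, x ≫ eHomWhiskerRight V e C =
      (y ≫ eHomWhiskerLeft V A₁ (π i)) ≫ eHomWhiskerLeft V A₁ (f i) := fun i => by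
    rw [hxy, Category.assoc, ← eHomWhiskerLeft_comp, hπ i]
  let li i := (hf i).lift x _ (hxy' i)
  have hli₁ i : li i ≫ eHomWhiskerLeft V A₂ (f i) = x := (hf i).lift_fst _ _ _
  have hli₂ i : li i ≫ eHomWhiskerRight V e (X i) = y ≫ eHomWhiskerLeft V A₁ (π i) :=
    (hf i).lift_snd _ _ _
  obtain ⟨l, ⟨hl₁, hl₂⟩, hl⟩ := huniv A₂ Z x li hli₁
  refine ⟨l, ⟨hl₁, ?_⟩, fun l' ⟨h₁, h₂⟩ => hl l' ⟨h₁, fun i => ?_⟩⟩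
  · obtain ⟨s, -, hs⟩ := huniv A₁ Z (y ≫ eHomWhiskerLeft V A₁ m)
      (fun i => y ≫ eHomWhiskerLeft V A₁ (π i))
      (fun i => by rw [Category.assoc, ← eHomWhiskerLeft_comp, hπ i])
    rw [hs y ⟨rfl, fun _ => rfl⟩]
    refine hs _ ⟨?_, fun i => ?_⟩
    · rw [Category.assoc, ← eHom_whisker_exchange, ← Category.assoc, hl₁, hxy]
    · rw [Category.assoc, ← eHom_whisker_exchange, ← Category.assoc, hl₂ i, hli₂ i]
  · apply (hf i).hom_ext
    · rw [Category.assoc, ← eHomWhiskerLeft_comp, hπ i, h₁, hli₁ i]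
    · rw [Category.assoc, eHom_whisker_exchange, ← Category.assoc, h₂, hli₂ i]

lemma ordOrth_of_forall_isIso {N : MorphismProperty B} {X P : B} {e : X ⟶ P}
    (he : ∀ ⦃Q : B⦄ (q : Q ⟶ P) (x : X ⟶ Q), N q → x ≫ q = e → IsIso q)
    {Z₁ Z₂ : B} {n : Z₁ ⟶ Z₂} [Mono n]
    (hpb : ∀ w : P ⟶ Z₂,
      ∃ (Q : B) (p : Q ⟶ Z₁) (q : Q ⟶ P), IsVPullbackSq V B p q n w ∧ N q) :
    OrdOrth B e n := by
  intro u w huw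
  obtain ⟨Q, p, q, hsq, hq⟩ := hpb w
  obtain ⟨x, hxp, hxq⟩ := hsq.exists_lift u e huw
  have := he q x hq hxq
  refine ⟨inv q ≫ p, ⟨?_, ?_⟩, fun d ⟨_, hd⟩ => ?_⟩
  · rw [← hxq, Category.assoc, IsIso.hom_inv_id_assoc, hxp]
  · rw [Category.assoc, hsq.1, IsIso.inv_hom_id_assoc]
  · rw [← cancel_mono n, hd, Category.assoc, hsq.1, IsIso.inv_hom_id_assoc]

lemma vRlp_vLlp_vRlp (H : MorphismProperty B) :
    vRlp V B (vLlp V B (vRlp V B H)) = vRlp V B H :=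
  le_antisymm (fun _ _ _ hf _ _ e he => hf e fun _ _ _ hm => hm e he)
    fun _ _ _ hf _ _ _ he => he _ hf

lemma vRlp_sup (H K : MorphismProperty B) :
    vRlp V B (H ⊔ K) = interProp B (vRlp V B H) (vRlp V B K) :=
  le_antisymm
    (fun _ _ _ hf => ⟨fun _ _ e he => hf e (Or.inl he), fun _ _ e he => hf e (Or.inr he)⟩)
    fun _ _ _ hf _ _ e he => he.elim (hf.1 e) (hf.2 e)

end Orthogonality

section Cotensor

variable {V B}
open MonoidalClosed

lemma uncurry_cotensorComparison {v : V} {C X : B} (ε : v ⟶ (C ⟶[V] X)) (A : B) :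
    uncurry (cotensorComparison V B ε A) =
      (ε ▷ (A ⟶[V] C)) ≫ (β_ (C ⟶[V] X) (A ⟶[V] C)).hom ≫ eComp V A C X := by
  rw [cotensorComparison, uncurry_pre_app, uncurry_curry]

lemma cotensorComparison_comp_eHomWhiskerLeft {v : V} {X₁ X₂ C₁ C₂ : B} {m : X₁ ⟶ X₂}
    {ε₁ : v ⟶ (C₁ ⟶[V] X₁)} {ε₂ : v ⟶ (C₂ ⟶[V] X₂)} {t : C₁ ⟶ C₂}
    (ht : ε₁ ≫ eHomWhiskerLeft V C₁ m = ε₂ ≫ eHomWhiskerRight V t X₂) (A : B) :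
    cotensorComparison V B ε₁ A ≫ (ihom v).map (eHomWhiskerLeft V A m) =
      eHomWhiskerLeft V A t ≫ cotensorComparison V B ε₂ A := by
  apply uncurry_injective
  rw [uncurry_natural_right, uncurry_natural_left, uncurry_cotensorComparison,
    uncurry_cotensorComparison, Category.assoc, Category.assoc, eComp_eHomWhiskerLeft,
    ← BraidedCategory.braiding_naturality_left_assoc, ← comp_whiskerRight_assoc, ht,
    comp_whiskerRight_assoc, whisker_exchange_assoc,
    BraidedCategory.braiding_naturality_right_assoc, eHomWhiskerLeft_whiskerRight_eComp,
    ← BraidedCategory.braiding_naturality_left_assoc]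

lemma cotensorComparison_comp_eHomWhiskerRight {v : V} {C X : B} (ε : v ⟶ (C ⟶[V] X))
    {A₁ A₂ : B} (e : A₁ ⟶ A₂) :
    cotensorComparison V B ε A₂ ≫ (ihom v).map (eHomWhiskerRight V e X) =
      eHomWhiskerRight V e C ≫ cotensorComparison V B ε A₁ := by
  apply uncurry_injective
  rw [uncurry_natural_right, uncurry_natural_left, uncurry_cotensorComparison,
    uncurry_cotensorComparison, Category.assoc, Category.assoc, eComp_eHomWhiskerRight,
    ← BraidedCategory.braiding_naturality_right_assoc, whisker_exchange_assoc]

lemma IsCotensorCounit.bijective {v : V} {C X : B} {ε : v ⟶ (C ⟶[V] X)}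
    (hε : IsCotensorCounit V B v X C ε) (A : B) :
    Function.Bijective fun s : A ⟶ C => ε ≫ eHomWhiskerRight V s X := by
  have := hε A
  have h : (ρ_ (C ⟶[V] X)).inv ≫ (β_ (C ⟶[V] X) (𝟙_ V)).hom = (λ_ (C ⟶[V] X)).inv := by
    rw [← cancel_mono (λ_ (C ⟶[V] X)).hom, Category.assoc, braiding_leftUnitor,
      Iso.inv_hom_id, Iso.inv_hom_id]
  have key (s : A ⟶ C) : ε ≫ eHomWhiskerRight V s X =
      (ρ_ v).inv ≫ uncurry (eHomEquiv V s ≫ cotensorComparison V B ε A) := by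
    rw [uncurry_natural_left, uncurry_cotensorComparison, whisker_exchange_assoc,
      BraidedCategory.braiding_naturality_right_assoc, ← rightUnitor_inv_naturality_assoc,
      reassoc_of% h]
    rfl
  refine ⟨fun s₁ s₂ hs => ?_, fun z => ?_⟩
  · simp only [key, cancel_epi] at hs
    exact (eHomEquiv V).injective ((cancel_mono _).1 (uncurry_injective hs))
  · refine ⟨(eHomEquiv V).symm
      (curry ((ρ_ v).hom ≫ z) ≫ inv (cotensorComparison V B ε A)), ?_⟩
    simp only [key, Equiv.apply_symm_apply, Category.assoc, IsIso.inv_hom_id, Category.comp_id,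
      uncurry_curry, Iso.inv_hom_id_assoc]

lemma VOrth.cotensor {v : V} {X₁ X₂ C₁ C₂ : B} {m : X₁ ⟶ X₂}
    {ε₁ : v ⟶ (C₁ ⟶[V] X₁)} {ε₂ : v ⟶ (C₂ ⟶[V] X₂)}
    (hε₁ : IsCotensorCounit V B v X₁ C₁ ε₁) (hε₂ : IsCotensorCounit V B v X₂ C₂ ε₂)
    {t : C₁ ⟶ C₂} (ht : ε₁ ≫ eHomWhiskerLeft V C₁ m = ε₂ ≫ eHomWhiskerRight V t X₂)
    {A₁ A₂ : B} {e : A₁ ⟶ A₂} (hm : VOrth V B e m) : VOrth V B e t := by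
  have := hε₁ A₁; have := hε₁ A₂; have := hε₂ A₁; have := hε₂ A₂
  exact ((ihom v).map_isPullback hm).of_iso'
    (asIso (cotensorComparison V B ε₁ A₂)) (asIso (cotensorComparison V B ε₂ A₂))
    (asIso (cotensorComparison V B ε₁ A₁)) (asIso (cotensorComparison V B ε₂ A₁))
    (cotensorComparison_comp_eHomWhiskerLeft ht A₂)
    (cotensorComparison_comp_eHomWhiskerRight ε₁ e)
    (cotensorComparison_comp_eHomWhiskerRight ε₂ e)
    (cotensorComparison_comp_eHomWhiskerLeft ht A₁)

lemma vOrth_of_ordOrth_cotensor (hc : Cotensored V B) {A₁ A₂ X₁ X₂ : B} {e : A₁ ⟶ A₂}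
    {m : X₁ ⟶ X₂}
    (hord : ∀ (v : V) (C₁ C₂ : B) (ε₁ : v ⟶ (C₁ ⟶[V] X₁)) (ε₂ : v ⟶ (C₂ ⟶[V] X₂)),
      IsCotensorCounit V B v X₁ C₁ ε₁ → IsCotensorCounit V B v X₂ C₂ ε₂ →
      ∀ t : C₁ ⟶ C₂, ε₁ ≫ eHomWhiskerLeft V C₁ m = ε₂ ≫ eHomWhiskerRight V t X₂ →
      OrdOrth B e t) : VOrth V B e m := by
  apply isPullback_of_existsUnique (eHom_whisker_exchange V e m)
  intro Z x y hxy
  -- generalized elements `Z ⟶ B(A, Xᵢ)` are morphisms `A ⟶ [Z, Xᵢ]`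
  obtain ⟨C₁, ε₁, hε₁⟩ := hc Z X₁
  obtain ⟨C₂, ε₂, hε₂⟩ := hc Z X₂
  obtain ⟨t, ht : ε₂ ≫ eHomWhiskerRight V t X₂ = _⟩ :=
    (hε₂.bijective C₁).2 (ε₁ ≫ eHomWhiskerLeft V C₁ m)
  have transpose_comp {A : B} (s : A ⟶ C₁) :
      ε₂ ≫ eHomWhiskerRight V (s ≫ t) X₂ = (ε₁ ≫ eHomWhiskerRight V s X₁) ≫
        eHomWhiskerLeft V A m := by
    rw [eHomWhiskerRight_comp, ← Category.assoc, ht, Category.assoc, Category.assoc,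
      eHom_whisker_exchange]
  obtain ⟨s₂, rfl⟩ := (hε₂.bijective A₂).2 x
  obtain ⟨s₁, rfl⟩ := (hε₁.bijective A₁).2 y
  dsimp only at hxy ⊢
  have hsq : s₁ ≫ t = e ≫ s₂ := (hε₂.bijective A₁).1 <| by
    dsimp only
    rw [transpose_comp, ← hxy, eHomWhiskerRight_comp, Category.assoc]
  obtain ⟨d, ⟨hd₁, hd₂⟩, hd⟩ := hord Z C₁ C₂ ε₁ ε₂ hε₁ hε₂ t ht.symm s₁ s₂ hsq
  refine ⟨ε₁ ≫ eHomWhiskerRight V d X₁, ⟨?_, ?_⟩, fun l ⟨h₁, h₂⟩ => ?_⟩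
  · rw [← transpose_comp, hd₂]
  · rw [← hd₁, eHomWhiskerRight_comp, Category.assoc]
  · obtain ⟨d', rfl⟩ := (hε₁.bijective A₂).2 l
    rw [hd d' ⟨(hε₁.bijective A₁).1 ?_, (hε₂.bijective A₂).1 ?_⟩]
    · simp only [eHomWhiskerRight_comp, ← Category.assoc, h₂]
    · simp only [transpose_comp, h₁]

theorem factorizationsExist_vLlp_vRlp (hc : Cotensored V B) {H M : MorphismProperty B}
    (hHM : vRlp V B H ≤ M) (hmono : M ≤ vMono V B)
    (hint : ∀ {ι : Type (max u₂ v₂)} {C : B} (X : ι → B) (f : ∀ i, X i ⟶ C),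
      (∀ i, M (f i)) →
        ∃ (P : B) (m : P ⟶ C) (π : ∀ i, P ⟶ X i), IsVFibreProduct V B f m π)
    (hpb : ∀ ⦃X Z Q : B⦄ (m : X ⟶ Z) (g : Q ⟶ Z), M m →
      ∃ (P : B) (p : P ⟶ X) (f : P ⟶ Q), IsVPullbackSq V B p f m g) :
    FactorizationsExist B (vLlp V B (vRlp V B H)) (vRlp V B H) := by
  have hmono' {X Y : B} {f : X ⟶ Y} (hf : vRlp V B H f) : Mono f :=
    mono_of_vMono (hmono _ (hHM _ hf))
  intro X Y f
  let ι := Σ Z : B, {n : Z ⟶ Y // vRlp V B H n ∧ ∃ g : X ⟶ Z, g ≫ n = f}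
  obtain ⟨P, m, π, hfp⟩ := hint (fun i : ι => i.1) (fun i => i.2.1) (fun i => hHM _ i.2.2.1)
  have hm : vRlp V B H m := fun _ _ h hh =>
    VOrth.of_isVFibreProduct hfp fun i => i.2.2.1 h hh
  have := hmono' hm
  obtain ⟨e, he⟩ := hfp.exists_lift f (fun i => i.2.2.2.choose) (fun i => i.2.2.2.choose_spec)
  have extremal ⦃Q : B⦄ (q : Q ⟶ P) (x : X ⟶ Q) (hq : vRlp V B H q) (hx : x ≫ q = e) :
      IsIso q := by
    let i : ι :=
      ⟨Q, q ≫ m, fun _ _ h hh => (hq h hh).comp (hm h hh), x, by simp [← he, ← hx]⟩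
    have := hmono' hq
    have : IsSplitEpi q :=
      ⟨⟨π i, by rw [← cancel_mono m, Category.assoc, hfp.1 i, Category.id_comp]⟩⟩
    exact isIso_of_mono_of_isSplitEpi q
  refine ⟨P, e, m, fun Z₁ Z₂ n hn => ?_, hm, he⟩
  refine vOrth_of_ordOrth_cotensor hc fun v C₁ C₂ ε₁ ε₂ hε₁ hε₂ t ht => ?_
  have ht : vRlp V B H t := fun _ _ h hh => (hn h hh).cotensor hε₁ hε₂ ht
  have := hmono' ht
  refine ordOrth_of_forall_isIso (V := V) extremal fun w => ?_
  obtain ⟨Q, p, q, hsq⟩ := hpb t w (hHM _ ht)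
  exact ⟨Q, p, q, hsq, fun _ _ h hh => (ht h hh).of_isVPullbackSq hsq⟩

end Cotensor

/-- Let `(E,M)` be a `V`-prefactorization system on a cotensored `V`-category with
`M ⊆ Mono_V B`, such that `B` has `V`-intersections of `M`-morphisms and `V`-pullbacks
of `M`-morphisms. Then `(E,M)` is a `V`-factorization system, and for any class `Σ`,
setting `N = Σ^{↓V} ∩ M`, the pair `(N^{↑V}, N)` is a `V`-factorization system. -/
theorem stmt14 (hc : Cotensored V B) (E M : MorphismProperty B)
    (h : IsVPrefactorization V B E M)
    (hmono : ∀ ⦃X Y : B⦄ (f : X ⟶ Y), M f → vMono V B f)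
    (hint : ∀ {ι : Type (max u₂ v₂)} {C : B} (X : ι → B) (f : ∀ i, X i ⟶ C),
      (∀ i, M (f i)) →
        ∃ (P : B) (m : P ⟶ C) (π : ∀ i, P ⟶ X i), IsVFibreProduct V B f m π)
    (hpb : ∀ ⦃X Z Q : B⦄ (m : X ⟶ Z) (g : Q ⟶ Z), M m →
      ∃ (P : B) (p : P ⟶ X) (f : P ⟶ Q), IsVPullbackSq V B p f m g) :
    IsVFactorizationSystem V B E M ∧
      ∀ S : MorphismProperty B,
        IsVFactorizationSystem V B
          (vLlp V B (interProp B (vRlp V B S) M)) (interProp B (vRlp V B S) M) := by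
  obtain ⟨hEM, hME⟩ := h
  have factorization (H : MorphismProperty B) (hHM : vRlp V B H ≤ M) :
      IsVFactorizationSystem V B (vLlp V B (vRlp V B H)) (vRlp V B H) :=
    ⟨⟨vRlp_vLlp_vRlp (V := V) H, rfl⟩, factorizationsExist_vLlp_vRlp hc hHM hmono hint hpb⟩
  refine ⟨by simpa only [hEM, hME] using factorization E hEM.le, fun S => ?_⟩
  have hN : interProp B (vRlp V B S) M = vRlp V B (S ⊔ E) := by rw [vRlp_sup, hEM]
  rw [hN]
  exact factorization _ (hN ▸ fun _ _ _ hf => hf.2)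

end EnrichedFS
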